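/- Strong failure of the Łoś–Tarski theorem in the finite: there exists a finite vocabulary τ (namely τ = {≤, S, P, c, d} with ≤ and S binary relation symbols, P a unary relation symbol, and c, d constant symbols) such that, letting 𝒮 be the class of all finite τ-structures, for each natural number k there is an FO(τ) sentence φ_k that is hereditary over 𝒮 (every substructure of a finite model of φ_k is again a model of φ_k) but is not equivalent over 𝒮 to any ∃^k∀* sentence, i.e., for every prenex sentence γ of the form ∃x₁…∃x_k ∀y₁…∀y_n ψ with ψ quantifier-free, there is a finite τ-structure satisfying exactly one of φ_k and γ. -/

import Mathlib

/-!
`phi k` says: `≤` is a linear order with least element `c` and greatest element `d`, `S` only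
relates an element to its immediate successor, and *if* every element other than `d` has an
`S`-successor, then at least `k + 1` elements satisfy `P`. The first clause is universal, hence
hereditary. In a finite model, a substructure in which every element other than `d` has an
`S`-successor is the whole model: for `a` outside it, the largest element of the substructure
below `a` would have its successor beyond `a`. So the implication is hereditary as well.

For the second half take the chain `0 < 1 < ⋯ < m` with `S` the successor relation and
`P = {D, 2D, …, (k + 1)D}`, where `D = 2R` and `R = 4 ^ (n + 1)`; it satisfies `phi k`. If it also
satisfies `γ = ∃^k ∀^n ψ`, some point `t` of `P` lies at distance `≥ R` from all `k` witnesses, and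
removing `t` from `P` gives a model of `¬ phi k`. That model still satisfies `γ` with the same
witnesses: for any `n` values there is a scale `L = 4 ^ s` with `4L ≤ R` such that no value lies
at distance in `[L, 4L)` from `t`, and moving the window `(t - L, t + L)` up by `2L` is a partial
isomorphism into the original chain that fixes the witnesses and hides the missing point `t`, so
it transfers `ψ`.
-/

open FirstOrder Language

namespace LTFinite

/-- Relation symbols of the vocabulary `τ = {≤, S, P, c, d}`: binary `≤` and `S`, unary `P`. -/
inductive TauRel : ℕ → Type
  | le : TauRel 2
  | succ : TauRel 2
  | pelt : TauRel 1

/-- Function symbols of `τ`: the constant symbols `c` and `d`. -/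
inductive TauFun : ℕ → Type
  | c : TauFun 0
  | d : TauFun 0

/-- The vocabulary `τ = {≤, S, P, c, d}` with binary relation symbols `≤` and `S`, a unary
relation symbol `P`, and constant symbols `c` and `d`. -/
def tau : FirstOrder.Language := ⟨TauFun, TauRel⟩

/-- Universally quantify over the last `n` free (de Bruijn) variables of a bounded formula,
leaving the first `k` variables free. -/
def allsFrom (k : ℕ) : ∀ {n : ℕ}, tau.BoundedFormula Empty (k + n) → tau.BoundedFormula Empty k
  | 0, ψ => ψ
  | _ + 1, ψ => allsFrom k ψ.all

/-- The `∃^k∀*` sentence `∃x₁…∃x_k ∀y₁…∀y_n ψ` built from a quantifier-free matrix `ψ`. -/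
def existsForallSentence (k n : ℕ) (ψ : tau.BoundedFormula Empty (k + n)) : tau.Sentence :=
  (allsFrom k ψ).exs

variable {M N : Type} [tau.Structure M] [tau.Structure N]

def leM (a b : M) : Prop := Structure.RelMap (L := tau) TauRel.le ![a, b]
def succM (a b : M) : Prop := Structure.RelMap (L := tau) TauRel.succ ![a, b]
def pM (a : M) : Prop := Structure.RelMap (L := tau) TauRel.pelt ![a]
def cM : M := constantMap (L := tau) TauFun.c
def dM : M := constantMap (L := tau) TauFun.d

section Atoms

variable {n : ℕ}

def cT : tau.Term (Empty ⊕ Fin n) := Constants.term (L := tau) TauFun.c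
def dT : tau.Term (Empty ⊕ Fin n) := Constants.term (L := tau) TauFun.d

def leF (t₁ t₂ : tau.Term (Empty ⊕ Fin n)) : tau.BoundedFormula Empty n :=
  Relations.boundedFormula₂ (L := tau) TauRel.le t₁ t₂
def succF (t₁ t₂ : tau.Term (Empty ⊕ Fin n)) : tau.BoundedFormula Empty n :=
  Relations.boundedFormula₂ (L := tau) TauRel.succ t₁ t₂
def pF (t : tau.Term (Empty ⊕ Fin n)) : tau.BoundedFormula Empty n :=
  Relations.boundedFormula₁ (L := tau) TauRel.pelt t

variable {v : Empty → M} {xs : Fin n → M}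

@[simp] lemma realize_cT : (cT : tau.Term (Empty ⊕ Fin n)).realize (Sum.elim v xs) = cM :=
  Term.realize_constants
@[simp] lemma realize_dT : (dT : tau.Term (Empty ⊕ Fin n)).realize (Sum.elim v xs) = dM :=
  Term.realize_constants
@[simp] lemma realize_leF {t₁ t₂} : (leF t₁ t₂).Realize v xs ↔
    leM (t₁.realize (Sum.elim v xs)) (t₂.realize (Sum.elim v xs)) :=
  BoundedFormula.realize_rel₂
@[simp] lemma realize_succF {t₁ t₂} : (succF t₁ t₂).Realize v xs ↔
    succM (t₁.realize (Sum.elim v xs)) (t₂.realize (Sum.elim v xs)) :=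
  BoundedFormula.realize_rel₂
@[simp] lemma realize_pF {t} : (pF t).Realize v xs ↔ pM (t.realize (Sum.elim v xs)) :=
  BoundedFormula.realize_rel₁

end Atoms

structure IsCoveringOrder (M : Type) [tau.Structure M] : Prop where
  total : ∀ x y : M, leM x y ∨ leM y x
  antisymm : ∀ x y : M, leM x y → leM y x → x = y
  trans : ∀ x y z : M, leM x y → leM y z → leM x z
  c_le : ∀ x : M, leM cM x
  le_d : ∀ x : M, leM x dM
  succ_lt : ∀ x y : M, succM x y → leM x y ∧ x ≠ y
  succ_covBy : ∀ x y z : M, succM x y → leM x z → leM z y → z = x ∨ z = y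

def SuccTotal (M : Type) [tau.Structure M] : Prop := ∀ x : M, x = dM ∨ ∃ y, succM x y

def PCardGe (M : Type) [tau.Structure M] (r : ℕ) : Prop :=
  ∃ xs : Fin r → M, (∀ i, pM (xs i)) ∧ Function.Injective xs

def coveringOrderMatrix : tau.BoundedFormula Empty 3 :=
  (leF &0 &1 ⊔ leF &1 &0) ⊓
  (leF &0 &1 ⊓ leF &1 &0 ⟹ &0 =' &1) ⊓
  (leF &0 &1 ⊓ leF &1 &2 ⟹ leF &0 &2) ⊓
  leF cT &0 ⊓ leF &0 dT ⊓
  (succF &0 &1 ⟹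
    leF &0 &1 ⊓ ∼(&0 =' &1) ⊓ (leF &0 &2 ⊓ leF &2 &1 ⟹ &2 =' &0 ⊔ &2 =' &1))

def coveringOrderSentence : tau.Sentence := coveringOrderMatrix.alls

def succTotalSentence : tau.Sentence := (&0 =' dT ⊔ (succF &0 &1).ex).all

noncomputable def pCardGeSentence (r : ℕ) : tau.Sentence :=
  (BoundedFormula.iInf (fun i : Fin r => pF &i) ⊓
    BoundedFormula.iInf (fun p : {p : Fin r × Fin r // p.1 ≠ p.2} => ∼(&p.1.1 =' &p.1.2))).exs

noncomputable def phi (k : ℕ) : tau.Sentence :=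
  coveringOrderSentence ⊓ (succTotalSentence ⟹ pCardGeSentence (k + 1))

variable (M) in
lemma realize_coveringOrderSentence : M ⊨ coveringOrderSentence ↔ IsCoveringOrder M := by
  simp only [Sentence.Realize, coveringOrderSentence, coveringOrderMatrix,
    BoundedFormula.realize_alls, BoundedFormula.realize_inf, BoundedFormula.realize_sup,
    BoundedFormula.realize_imp, BoundedFormula.realize_not, BoundedFormula.realize_bdEqual,
    realize_leF, realize_succF, realize_cT, realize_dT, Function.comp_apply, Term.realize_var,
    Sum.elim_inr, and_imp]
  constructor
  · intro h
    have h' (x y z : M) := h ![x, y, z]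
    simp only [Matrix.cons_val_zero, Matrix.cons_val_one, Matrix.cons_val_two] at h'
    exact ⟨fun x y => (h' x y x).1.1.1.1.1, fun x y => (h' x y x).1.1.1.1.2,
      fun x y z => (h' x y z).1.1.1.2, fun x => (h' x x x).1.1.2, fun x => (h' x x x).1.2,
      fun x y hs => ((h' x y x).2 hs).1, fun x y z hs => ((h' x y z).2 hs).2⟩
  · intro h xs
    exact ⟨⟨⟨⟨⟨h.total _ _, h.antisymm _ _⟩, h.trans _ _ _⟩, h.c_le _⟩, h.le_d _⟩,
      fun hs => ⟨h.succ_lt _ _ hs, h.succ_covBy _ _ _ hs⟩⟩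

variable (M) in
lemma realize_succTotalSentence : M ⊨ succTotalSentence ↔ SuccTotal M := by
  simp [Sentence.Realize, succTotalSentence, SuccTotal, Formula.Realize, Fin.snoc]

variable (M) in
lemma realize_pCardGeSentence (r : ℕ) : M ⊨ pCardGeSentence r ↔ PCardGe M r := by
  simp [Sentence.Realize, pCardGeSentence, PCardGe, Function.injective_iff_pairwise_ne, Pairwise]

variable (M) in
lemma realize_phi (k : ℕ) :
    M ⊨ phi k ↔ IsCoveringOrder M ∧ (SuccTotal M → PCardGe M (k + 1)) := by
  rw [← realize_coveringOrderSentence, ← realize_succTotalSentence, ← realize_pCardGeSentence]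
  simp only [phi, Sentence.Realize, Formula.realize_inf, Formula.realize_imp]

lemma isQF_coveringOrderMatrix : coveringOrderMatrix.IsQF := by
  repeat' first
    | exact Relations.isQF _ _
    | exact (BoundedFormula.IsAtomic.equal _ _).isQF
    | exact BoundedFormula.isQF_bot
    | apply BoundedFormula.IsQF.inf
    | apply BoundedFormula.IsQF.sup
    | apply BoundedFormula.IsQF.imp

lemma _root_.FirstOrder.Language.BoundedFormula.IsUniversal.alls {L : Language} {α : Type*}
    {n : ℕ} {φ : L.BoundedFormula α n} (h : φ.IsUniversal) : φ.alls.IsUniversal := by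
  induction n with
  | zero => exact h
  | succ n ih => exact ih h.all

lemma _root_.FirstOrder.Language.BoundedFormula.IsUniversal.realize_sentence_of_embedding
    {L : Language} {M N : Type*} [L.Structure M] [L.Structure N] {φ : L.Sentence}
    (hφ : φ.IsUniversal) (f : M ↪[L] N) (h : N ⊨ φ) : M ⊨ φ := by
  have := hφ.realize_embedding f (v := default) (xs := default)
  rw [Subsingleton.elim (f ∘ default) default, Subsingleton.elim (f ∘ default) default] at this
  exact this h

lemma IsCoveringOrder.of_embedding (f : M ↪[tau] N) (h : IsCoveringOrder N) :
    IsCoveringOrder M := by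
  rw [← realize_coveringOrderSentence] at h ⊢
  exact isQF_coveringOrderMatrix.isUniversal.alls.realize_sentence_of_embedding f h

lemma succM_embedding (f : M ↪[tau] N) (a b : M) : succM (f a) (f b) ↔ succM a b := by
  unfold succM
  convert f.map_rel (L := tau) TauRel.succ ![a, b] using 2
  ext i
  fin_cases i <;> rfl

lemma dM_embedding (f : M ↪[tau] N) : f dM = dM := f.map_constants _

noncomputable abbrev IsCoveringOrder.linearOrder (h : IsCoveringOrder M) : LinearOrder M where
  le := leM
  le_refl x := (h.total x x).elim id id
  le_trans := h.trans
  le_antisymm := h.antisymm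
  le_total := h.total
  toDecidableLE := Classical.decRel _

lemma IsCoveringOrder.eq_top_of_succTotal [Finite M] (h : IsCoveringOrder M)
    (A : tau.Substructure M) (hA : SuccTotal A) : A = ⊤ := by
  let _ := h.linearOrder
  by_contra hne
  obtain ⟨a, ha⟩ : ∃ a, a ∉ A := by simpa [eq_top_iff, SetLike.le_def] using hne
  have hcA : (cM : M) ∈ A := A.constants_mem TauFun.c
  obtain ⟨u, ⟨huA, hua⟩, hmax⟩ := Set.exists_max_image {x | x ∈ A ∧ x < a} id
    (Set.toFinite _) ⟨cM, hcA, lt_of_le_of_ne (h.c_le a) fun hca => ha (hca ▸ hcA)⟩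
  rcases hA ⟨u, huA⟩ with hud | ⟨v, huv⟩
  · have hud : u = dM := by simpa [← dM_embedding A.subtype] using congrArg Subtype.val hud
    exact absurd (h.le_d a) (not_le.2 (hud ▸ hua))
  · have huv : succM u (v : M) := (succM_embedding A.subtype ⟨u, huA⟩ v).2 huv
    have hlt : u < v := lt_of_le_of_ne (h.succ_lt u v huv).1 (h.succ_lt u v huv).2
    rcases le_or_gt (v : M) a with hva | hav
    · have hva : (v : M) < a := lt_of_le_of_ne hva fun hva => ha (hva ▸ v.2)
      exact absurd (hmax v ⟨v.2, hva⟩) (not_le.2 hlt)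
    · rcases h.succ_covBy u v a huv hua.le hav.le with rfl | rfl
      · exact ha huA
      · exact ha v.2

theorem phi_hereditary [Finite M] (k : ℕ) (hM : M ⊨ phi k) (A : tau.Substructure M) :
    A ⊨ phi k := by
  obtain ⟨hord, -⟩ := (realize_phi M k).1 hM
  refine (realize_phi A k).2 ⟨hord.of_embedding A.subtype, fun hA => ?_⟩
  obtain rfl := hord.eq_top_of_succTotal A hA
  exact ((realize_phi _ k).1
    ((StrongHomClass.realize_sentence Substructure.topEquiv (phi k)).2 hM)).2 hA

lemma realize_allsFrom {k : ℕ} {v : Empty → M} :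
    ∀ {n : ℕ} (ψ : tau.BoundedFormula Empty (k + n)) (xs : Fin k → M),
      (allsFrom k ψ).Realize v xs ↔ ∀ ys : Fin n → M, ψ.Realize v (Fin.append xs ys)
  | 0, ψ, xs => by simp [allsFrom, Fin.append_right_nil xs _ rfl]
  | n + 1, ψ, xs => by
    rw [allsFrom, realize_allsFrom]
    simp only [BoundedFormula.realize_all, ← Fin.append_snoc]
    exact ⟨fun h ys => Fin.snoc_init_self ys ▸ h _ _, fun h ys y => h _⟩

variable (M) in
lemma realize_existsForallSentence {k n : ℕ} (ψ : tau.BoundedFormula Empty (k + n)) :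
    M ⊨ existsForallSentence k n ψ ↔
      ∃ xs : Fin k → M, ∀ ys : Fin n → M, ψ.Realize default (Fin.append xs ys) := by
  simp only [existsForallSentence, Sentence.Realize, BoundedFormula.realize_exs, realize_allsFrom]

lemma funMap_c (x : Fin 0 → M) : Structure.funMap (L := tau) TauFun.c x = cM :=
  congrArg _ (Subsingleton.elim x default)

lemma funMap_d (x : Fin 0 → M) : Structure.funMap (L := tau) TauFun.d x = dM :=
  congrArg _ (Subsingleton.elim x default)

def substructureOfConstMem (S : Set M) (hc : cM ∈ S) (hd : dM ∈ S) : tau.Substructure M where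
  carrier := S
  fun_mem {n} f x _ := by
    cases f
    · exact (funMap_c x).symm ▸ hc
    · exact (funMap_d x).symm ▸ hd

theorem realize_comp_iff_of_injOn {S : Set M} (hc : cM ∈ S) (hd : dM ∈ S) {h : M → N}
    (hinj : S.InjOn h) (hhc : h cM = cM) (hhd : h dM = dM)
    (hrel : ∀ {l} (r : tau.Relations l) (v : Fin l → M), (∀ i, v i ∈ S) →
      (Structure.RelMap r (h ∘ v) ↔ Structure.RelMap r v))
    {l : ℕ} {ψ : tau.BoundedFormula Empty l} (hψ : ψ.IsQF) {xs : Fin l → M}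
    (hxs : ∀ i, xs i ∈ S) :
    ψ.Realize default (h ∘ xs) ↔ ψ.Realize default xs := by
  let A := substructureOfConstMem S hc hd
  let e : A ↪[tau] N :=
    { toFun := h ∘ (↑)
      inj' := fun a b hab => Subtype.ext (hinj a.2 b.2 hab)
      map_fun' := by
        intro n f x
        cases f
        · exact (congrArg h (funMap_c _)).trans (hhc.trans (funMap_c _).symm)
        · exact (congrArg h (funMap_d _)).trans (hhd.trans (funMap_d _).symm)
      map_rel' := fun r v => hrel r (fun i => (v i : M)) fun i => (v i).2 }
  let ys : Fin l → A := fun i => ⟨xs i, hxs i⟩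
  have he := hψ.realize_embedding e (v := default) (xs := ys)
  have hA := hψ.realize_embedding A.subtype (v := default) (xs := ys)
  rw [Subsingleton.elim (e ∘ default) default] at he
  rw [Subsingleton.elim (A.subtype ∘ default) default] at hA
  exact he.trans hA.symm

section Window

variable {t L a b : ℕ}

def windowShift (t L v : ℕ) : ℕ := if t < v + L ∧ v < t + L then v + 2 * L else v

def FarOrNear (t L v : ℕ) : Prop :=
  v + 4 * L ≤ t ∨ (t < v + L ∧ v < t + L) ∨ t + 4 * L ≤ v

lemma windowShift_eq_self (h : a + L ≤ t ∨ t + L ≤ a) : windowShift t L a = a := by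
  unfold windowShift; split_ifs <;> omega

lemma windowShift_le {m : ℕ} (htm : t + 4 * L ≤ m) (ha : a ≤ m) :
    windowShift t L a ≤ m := by
  unfold windowShift; split_ifs <;> omega

lemma windowShift_le_windowShift_iff (ha : FarOrNear t L a) (hb : FarOrNear t L b) :
    windowShift t L a ≤ windowShift t L b ↔ a ≤ b := by
  unfold FarOrNear at ha hb
  unfold windowShift; split_ifs <;> omega

lemma windowShift_inj (ha : FarOrNear t L a) (hb : FarOrNear t L b) :
    windowShift t L a = windowShift t L b ↔ a = b := by
  unfold FarOrNear at ha hb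
  unfold windowShift; split_ifs <;> omega

lemma windowShift_eq_windowShift_add_one_iff (ha : FarOrNear t L a)
    (hb : FarOrNear t L b) : windowShift t L b = windowShift t L a + 1 ↔ b = a + 1 := by
  unfold FarOrNear at ha hb
  unfold windowShift; split_ifs <;> omega

lemma windowShift_mem_iff {T : Set ℕ} (hL : 1 ≤ L)
    (hT : ∀ s ∈ T, s ≠ t → s + L ≤ t ∨ t + 3 * L ≤ s) :
    windowShift t L a ∈ T ↔ a ∈ T \ {t} := by
  unfold windowShift
  split_ifs with hnear
  · refine iff_of_false (fun hmem => ?_) fun hmem => ?_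
    · rcases hT _ hmem (by omega) with h | h <;> omega
    · rcases hT _ hmem.1 hmem.2 with h | h <;> omega
  · simp only [Set.mem_sdiff, Set.mem_singleton_iff, iff_self_and]
    omega

end Window

lemma exists_far_of_separated {T : Finset ℕ} {k R : ℕ} (hcard : k < T.card)
    (hsep : ∀ s ∈ T, ∀ t ∈ T, s ≠ t → s + 2 * R ≤ t ∨ t + 2 * R ≤ s)
    (a : Fin k → ℕ) :
    ∃ t ∈ T, ∀ i, a i + R ≤ t ∨ t + R ≤ a i := by
  by_contra! hnear
  choose g hg using fun t : T => hnear t t.2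
  obtain ⟨s, t, hst, hgst⟩ := Fintype.exists_ne_map_eq_of_card_lt g (by simpa using hcard)
  have hs := hg s
  have ht := hg t
  rw [hgst] at hs
  rcases hsep s s.2 t t.2 (Subtype.coe_ne_coe.2 hst) with h | h <;> omega

lemma exists_scale_avoiding {b : ℕ} (hb : 1 < b) {n : ℕ} (g : Fin n → ℕ) :
    ∃ s ≤ n, ∀ i, g i < b ^ s ∨ b ^ (s + 1) ≤ g i := by
  classical
  obtain ⟨s, hs, hlog⟩ := Finset.exists_mem_notMem_of_card_lt_card
    (s := Finset.univ.image fun i => Nat.log b (g i)) (t := Finset.range (n + 1))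
    (by simpa using (Finset.card_image_le.trans (by simp)).trans_lt (Nat.lt_succ_self n))
  refine ⟨s, Finset.mem_range_succ_iff.1 hs, fun i => ?_⟩
  by_contra! h
  have hgi : g i ≠ 0 := by have := Nat.one_le_pow s b (by omega); omega
  have hle : s ≤ Nat.log b (g i) := Nat.le_log_of_pow_le hb h.1
  have hlt : Nat.log b (g i) < s + 1 := (Nat.log_lt_iff_lt_pow hb hgi).2 h.2
  exact hlog (Finset.mem_image.2 ⟨i, Finset.mem_univ _, by omega⟩)

def progression (D k : ℕ) : Finset ℕ := (Finset.Icc 1 (k + 1)).image (· * D)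

lemma mem_progression {D k s : ℕ} :
    s ∈ progression D k ↔ ∃ i, 1 ≤ i ∧ i ≤ k + 1 ∧ i * D = s := by
  simp [progression, and_assoc]

lemma card_progression {D : ℕ} (hD : 0 < D) (k : ℕ) : (progression D k).card = k + 1 := by
  rw [progression, Finset.card_image_of_injective _ (mul_left_injective₀ hD.ne'), Nat.card_Icc]
  omega

lemma progression_separated {D k : ℕ} :
    ∀ s ∈ progression D k, ∀ t ∈ progression D k, s ≠ t →
      s + D ≤ t ∨ t + D ≤ s := by
  simp only [mem_progression]
  rintro _ ⟨i, -, -, rfl⟩ _ ⟨j, -, -, rfl⟩ hij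
  rcases lt_or_gt_of_ne (ne_of_apply_ne (· * D) hij) with h | h
  · exact Or.inl (by nlinarith)
  · exact Or.inr (by nlinarith)

lemma progression_bounds {D k s : ℕ} (hs : s ∈ progression D k) :
    D ≤ s ∧ s ≤ (k + 1) * D := by
  obtain ⟨i, hi, hik, rfl⟩ := mem_progression.1 hs
  exact ⟨by nlinarith, Nat.mul_le_mul_right D hik⟩

-- `T` is a phantom parameter: chains with different `P`-sets are different types, each with
-- its own `tau.Structure` instance.
def Chain (m : ℕ) (_T : Set ℕ) : Type := Fin (m + 1)

namespace Chain

variable {m t L : ℕ} {T : Set ℕ}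

def val (x : Chain m T) : ℕ := Fin.val (n := m + 1) x

def ofNat (v : ℕ) : Chain m T := (⟨min v m, by omega⟩ : Fin (m + 1))

lemma val_le (x : Chain m T) : x.val ≤ m := Nat.lt_succ_iff.1 (Fin.isLt (n := m + 1) x)

lemma ext {x y : Chain m T} (h : x.val = y.val) : x = y := Fin.ext (n := m + 1) h

@[simp] lemma val_ofNat (v : ℕ) : (ofNat v : Chain m T).val = min v m := rfl

instance : Finite (Chain m T) := inferInstanceAs (Finite (Fin (m + 1)))

instance : Nonempty (Chain m T) := inferInstanceAs (Nonempty (Fin (m + 1)))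

instance : tau.Structure (Chain m T) where
  funMap {n} f _ := match n, f with
    | _, .c => ofNat 0
    | _, .d => ofNat m
  RelMap {n} r v := match n, r with
    | _, .le => (v 0).val ≤ (v 1).val
    | _, .succ => (v 1).val = (v 0).val + 1
    | _, .pelt => (v 0).val ∈ T

lemma leM_iff {x y : Chain m T} : leM x y ↔ x.val ≤ y.val := Iff.rfl

lemma succM_iff {x y : Chain m T} : succM x y ↔ y.val = x.val + 1 := Iff.rfl

lemma pM_iff {x : Chain m T} : pM x ↔ x.val ∈ T := Iff.rfl

@[simp] lemma val_cM : (cM : Chain m T).val = 0 := Nat.zero_min m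

@[simp] lemma val_dM : (dM : Chain m T).val = m := min_self m

lemma isCoveringOrder : IsCoveringOrder (Chain m T) where
  total x y := le_total x.val y.val
  antisymm _ _ h₁ h₂ := ext (le_antisymm h₁ h₂)
  trans _ _ _ := le_trans
  c_le x := by simp [leM_iff]
  le_d x := by simpa [leM_iff] using val_le x
  succ_lt x y h := by
    rw [succM_iff] at h
    exact ⟨by rw [leM_iff]; omega, fun hxy => by rw [hxy] at h; omega⟩
  succ_covBy x y z h h₁ h₂ := by
    rw [succM_iff] at h
    rw [leM_iff] at h₁ h₂
    rcases Nat.lt_or_ge z.val (x.val + 1) with hz | hz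
    · exact Or.inl (ext (by omega))
    · exact Or.inr (ext (by omega))

lemma succTotal : SuccTotal (Chain m T) := fun x =>
  if hx : x.val < m then Or.inr ⟨ofNat (x.val + 1), by rw [succM_iff, val_ofNat]; omega⟩
  else Or.inl (ext (by rw [val_dM]; have := val_le x; omega))

lemma realize_phi_iff {k : ℕ} : Chain m T ⊨ phi k ↔ PCardGe (Chain m T) (k + 1) := by
  rw [realize_phi]
  exact ⟨fun h => h.2 succTotal, fun h => ⟨isCoveringOrder, fun _ => h⟩⟩

lemma pCardGe_iff {T : Finset ℕ} (hT : ∀ s ∈ T, s ≤ m) {r : ℕ} :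
    PCardGe (Chain m T) r ↔ r ≤ T.card := by
  constructor
  · rintro ⟨xs, hP, hinj⟩
    simpa using Fintype.card_le_of_injective (fun i => (⟨(xs i).val, hP i⟩ : T))
      fun i j hij => hinj (ext (congrArg Subtype.val hij))
  · intro hr
    obtain ⟨e⟩ :=
      Function.Embedding.nonempty_of_card_le (α := Fin r) (β := T) (by simpa using hr)
    have hval (i : Fin r) : (ofNat (e i) : Chain m T).val = e i := by
      simp [hT _ (e i).2]
    refine ⟨fun i => ofNat (e i), fun i => ?_, fun i j hij => e.injective (Subtype.ext ?_)⟩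
    · simp [pM_iff, hval]
    · simpa [hval] using congrArg val hij

def shift (t L : ℕ) (x : Chain m (T \ {t})) : Chain m T := ofNat (windowShift t L x.val)

lemma val_shift (htm : t + 4 * L ≤ m) (x : Chain m (T \ {t})) :
    (shift t L x).val = windowShift t L x.val := by
  simp [shift, windowShift_le htm (val_le x)]

theorem realize_shift_iff (hL : 1 ≤ L) (ht : 4 * L ≤ t) (htm : t + 4 * L ≤ m)
    (hT : ∀ s ∈ T, s ≠ t → s + L ≤ t ∨ t + 3 * L ≤ s) {l : ℕ}
    {ψ : tau.BoundedFormula Empty l} (hψ : ψ.IsQF) {xs : Fin l → Chain m (T \ {t})}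
    (hxs : ∀ i, FarOrNear t L (xs i).val) :
    ψ.Realize default (shift t L ∘ xs) ↔ ψ.Realize default xs := by
  refine realize_comp_iff_of_injOn (S := {x : Chain m (T \ {t}) | FarOrNear t L x.val})
    (by simp [FarOrNear]; omega) (by simp [FarOrNear]; omega) ?_ ?_ ?_ ?_ hψ hxs
  · intro x hx y hy hxy
    exact ext ((windowShift_inj hx hy).1 (by simpa [val_shift htm] using congrArg val hxy))
  · exact ext (by rw [val_shift htm, val_cM, val_cM, windowShift_eq_self (by omega)])
  · exact ext (by rw [val_shift htm, val_dM, val_dM, windowShift_eq_self (by omega)])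
  · intro l r v hv
    cases r
    · show (shift t L (v 0)).val ≤ (shift t L (v 1)).val ↔ (v 0).val ≤ (v 1).val
      rw [val_shift htm, val_shift htm]
      exact windowShift_le_windowShift_iff (hv 0) (hv 1)
    · show (shift t L (v 1)).val = (shift t L (v 0)).val + 1 ↔ (v 1).val = (v 0).val + 1
      rw [val_shift htm, val_shift htm]
      exact windowShift_eq_windowShift_add_one_iff (hv 0) (hv 1)
    · show (shift t L (v 0)).val ∈ T ↔ (v 0).val ∈ T \ {t}
      rw [val_shift htm]
      exact windowShift_mem_iff hL hT

theorem realize_existsForallSentence_sdiff {k n R : ℕ}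
    (hR : 4 ^ (n + 1) ≤ R) (ht : R ≤ t) (htm : t + R ≤ m)
    (hT : ∀ s ∈ T, s ≠ t → s + R ≤ t ∨ t + R ≤ s)
    {ψ : tau.BoundedFormula Empty (k + n)} (hψ : ψ.IsQF) (xs : Fin k → Chain m T)
    (hxs : ∀ i, (xs i).val + R ≤ t ∨ t + R ≤ (xs i).val)
    (hF : ∀ ys : Fin n → Chain m T, ψ.Realize default (Fin.append xs ys)) :
    Chain m (T \ {t}) ⊨ existsForallSentence k n ψ := by
  rw [realize_existsForallSentence]
  refine ⟨fun i => ofNat (xs i).val, fun ys => ?_⟩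
  obtain ⟨s, hs, hscale⟩ :=
    exists_scale_avoiding (b := 4) (by norm_num) fun i => (ys i).val - t + (t - (ys i).val)
  have hL : 1 ≤ 4 ^ s := Nat.one_le_pow _ _ (by norm_num)
  have h4L : 4 * 4 ^ s ≤ R := by
    rw [← pow_succ']
    exact (Nat.pow_le_pow_right (by norm_num) (by omega)).trans hR
  have htm' : t + 4 * 4 ^ s ≤ m := by omega
  have hfar (i : Fin k) : windowShift t (4 ^ s) (xs i).val = (xs i).val :=
    windowShift_eq_self (by have := hxs i; omega)
  have hadm (i : Fin (k + n)) :
      FarOrNear t (4 ^ s) (Fin.append (fun i => ofNat (xs i).val) ys i).val := by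
    refine Fin.addCases (fun i => ?_) (fun i => ?_) i
    · rw [Fin.append_left, val_ofNat, min_eq_left (val_le _)]
      have := hxs i
      unfold FarOrNear
      omega
    · rw [Fin.append_right]
      have := hscale i
      rw [pow_succ] at this
      unfold FarOrNear
      omega
  have hshift : shift t (4 ^ s) ∘ Fin.append (fun i => ofNat (xs i).val) ys =
      Fin.append xs (shift t (4 ^ s) ∘ ys) := by
    funext i
    refine Fin.addCases (fun i => ext ?_) (fun i => ?_) i
    · simp [val_shift htm', val_le, hfar]
    · simp only [Function.comp_apply, Fin.append_right]
  rw [← realize_shift_iff hL (by omega) htm' (fun s hs hst => by have := hT s hs hst; omega)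
    hψ hadm, hshift]
  exact hF _

end Chain

theorem exists_xor_realize_phi_existsForallSentence (k n : ℕ)
    (ψ : tau.BoundedFormula Empty (k + n)) (hψ : ψ.IsQF) :
    ∃ (M : Type) (_ : tau.Structure M), Finite M ∧ Nonempty M ∧
      Xor' (M ⊨ phi k) (M ⊨ existsForallSentence k n ψ) := by
  obtain ⟨R, hR⟩ : ∃ R, R = 4 ^ (n + 1) := ⟨_, rfl⟩
  obtain ⟨m, hm⟩ : ∃ m, m = (k + 1) * (2 * R) + 2 * R := ⟨_, rfl⟩
  set T := progression (2 * R) k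
  have hD : 0 < 2 * R := by rw [hR]; positivity
  have hT (s : ℕ) (hs : s ∈ T) : 2 * R ≤ s ∧ s + 2 * R ≤ m := by
    have := progression_bounds hs
    omega
  have hF : Chain m T ⊨ phi k := by
    rw [Chain.realize_phi_iff, Chain.pCardGe_iff fun s hs => by have := hT s hs; omega,
      card_progression hD]
  by_cases hγ : Chain m T ⊨ existsForallSentence k n ψ
  · obtain ⟨xs, hxs⟩ := (realize_existsForallSentence _ ψ).1 hγ
    obtain ⟨t, htT, hfar⟩ := exists_far_of_separated (T := T) (R := R)
      (by rw [card_progression hD]; omega) progression_separated fun i => (xs i).val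
    refine ⟨Chain m ↑(T.erase t), inferInstance, inferInstance, inferInstance,
      Or.inr ⟨?_, ?_⟩⟩
    · rw [Finset.coe_erase]
      have := hT t htT
      exact Chain.realize_existsForallSentence_sdiff hR.ge (by omega) (by omega)
        (fun s hs hst => by have := progression_separated s hs t htT hst; omega) hψ xs hfar hxs
    · have hle (s : ℕ) (hs : s ∈ T.erase t) : s ≤ m := by
        have := hT s (Finset.mem_of_mem_erase hs); omega
      rw [Chain.realize_phi_iff, Chain.pCardGe_iff hle, Finset.card_erase_of_mem htT,
        card_progression hD]
      omega
  · exact ⟨Chain m T, inferInstance, inferInstance, inferInstance, Or.inl ⟨hF, hγ⟩⟩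

/-- **Strong failure of the Łoś–Tarski theorem in the finite**: for the vocabulary
`τ = {≤, S, P, c, d}` and each `k`, there is an `FO(τ)` sentence `φ_k` that is hereditary
over the class of all finite `τ`-structures (every nonempty substructure of a finite model
of `φ_k` is again a model of `φ_k`), but that is not equivalent over this class to any
`∃^k∀*` sentence: for every such prenex sentence `γ` there is a finite `τ`-structure
satisfying exactly one of `φ_k` and `γ`. -/
theorem strong_failure_los_tarski_finite (k : ℕ) :
    ∃ φ : tau.Sentence,
      (∀ (M : Type) [tau.Structure M] [Finite M] [Nonempty M], M ⊨ φ →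
        ∀ N : tau.Substructure M, (N : Set M).Nonempty → (N : Type) ⊨ φ) ∧
      ∀ (n : ℕ) (ψ : tau.BoundedFormula Empty (k + n)), ψ.IsQF →
        ∃ (M : Type) (_ : tau.Structure M), Finite M ∧ Nonempty M ∧
          Xor' (M ⊨ φ) (M ⊨ existsForallSentence k n ψ) :=
  ⟨phi k, fun _ _ _ _ hM N _ => phi_hereditary k hM N,
    exists_xor_realize_phi_existsForallSentence k⟩

end LTFinite
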